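/- Let Π be a Boolean MDDLog program over EDB schema S_E and D a set of disjointness constraints over S_E such that Π is semi-simple w.r.t. D. Then for every 0-type θ there are finitely many S_E-instances (templates) T_0, ..., T_n such that for every S_E-instance I whose 0-type θ' satisfies θ' ⊆ θ: I ⊭ Π if and only if there is a homomorphism from I to T_i for some i ≤ n. -/

import Mathlib

namespace MDDLogPaper

/-! ### Relation symbols, facts, instances, schemas -/

/-- A relation symbol: a name together with an arity.  Names are drawn from the
countably infinite supply `ℕ`. -/
structure RelSym where
  name : ℕ
  arity : ℕ
deriving DecidableEq

/-- A fact: a relation symbol applied to a tuple of constants. Constants are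
drawn from the fixed countably infinite set `ℕ`. -/
structure Fact where
  rel : RelSym
  args : List ℕ
deriving DecidableEq

/-- An instance is a finite set of facts. -/
abbrev Instance := Finset Fact

/-- A schema is a finite set of relation symbols. -/
abbrev Schema := Finset RelSym

/-- `I` is an `S`-instance: every fact of `I` uses a relation symbol of `S`,
applied to a tuple of constants of matching length. -/
def InstanceOver (S : Schema) (I : Instance) : Prop :=
  ∀ f ∈ I, f.rel ∈ S ∧ f.args.length = f.rel.arity

/-- The active domain of an instance: all constants occurring in its facts. -/
def adom (I : Instance) : Finset ℕ :=
  I.biUnion fun f => f.args.toFinset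

/-! ### Homomorphisms -/

/-- `h` is a homomorphism from `I` to `J`. -/
def IsHom (h : ℕ → ℕ) (I J : Instance) : Prop :=
  ∀ f ∈ I, (⟨f.rel, f.args.map h⟩ : Fact) ∈ J

/-- There is a homomorphism from `I` to `J`. -/
def HomTo (I J : Instance) : Prop := ∃ h, IsHom h I J

/-! ### Cycles and girth -/

/-- `I` has a cycle of length `n`: there are `n` distinct facts
`R₀(a₀), …, R_{n-1}(a_{n-1})` in `I` and positions `pᵢ ≠ pᵢ'` of `Rᵢ` such that
the constant of `aᵢ` at position `pᵢ'` equals the constant of `a_{i⊕1}` at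
position `p_{i⊕1}` (⊕ is addition modulo `n`). -/
def HasCycle (I : Instance) (n : ℕ) : Prop :=
  0 < n ∧ ∃ f : ℕ → Fact, ∃ p p' : ℕ → ℕ,
    (∀ i < n, f i ∈ I) ∧
    (∀ i < n, ∀ j < n, i ≠ j → f i ≠ f j) ∧
    (∀ i < n, p i ≠ p' i ∧ p i < (f i).args.length ∧ p' i < (f i).args.length) ∧
    (∀ i < n, (f i).args.getD (p' i) 0 = (f ((i + 1) % n)).args.getD (p ((i + 1) % n)) 0)

/-- The girth of `I` exceeds `k`: `I` has no cycle of length at most `k`. -/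
def GirthGT (I : Instance) (k : ℕ) : Prop := ∀ n ≤ k, ¬ HasCycle I n

/-! ### (Monadic) disjunctive Datalog: syntax -/

/-- An atom: a relation symbol applied to variables (variables are drawn from
the countably infinite supply `ℕ`). -/
structure Atom where
  rel : RelSym
  args : List ℕ
deriving DecidableEq

instance : Inhabited Atom := ⟨⟨⟨0, 0⟩, []⟩⟩

/-- The fact obtained by applying a variable assignment to an atom. -/
def Atom.subst (h : ℕ → ℕ) (a : Atom) : Fact := ⟨a.rel, a.args.map h⟩

/-- A disjunctive Datalog rule `S₁(x₁) ∨ … ∨ Sₘ(xₘ) ← R₁(y₁) ∧ … ∧ Rₙ(yₙ)`,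
given by the list of its head atoms and the list of its body atoms. -/
structure Rule where
  head : List Atom
  body : List Atom
deriving DecidableEq

def Rule.headVars (ρ : Rule) : List ℕ := (ρ.head.map Atom.args).flatten
def Rule.bodyVars (ρ : Rule) : List ℕ := (ρ.body.map Atom.args).flatten
def Rule.vars (ρ : Rule) : List ℕ := ρ.headVars ++ ρ.bodyVars

/-- Well-formed rule: the body is nonempty, atoms respect arities, and every
variable occurring in the head also occurs in the body. -/
def Rule.WF (ρ : Rule) : Prop :=
  ρ.body ≠ [] ∧ (∀ a ∈ ρ.head ++ ρ.body, a.args.length = a.rel.arity) ∧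
    ∀ x ∈ ρ.headVars, x ∈ ρ.bodyVars

/-- A disjunctive Datalog program: a finite set of rules together with a
selected goal relation. -/
structure Program where
  rules : List Rule
  goal : RelSym
deriving DecidableEq

/-- All relation symbols occurring in the program. -/
def Program.rels (P : Program) : List RelSym :=
  (P.rules.map fun ρ => (ρ.head ++ ρ.body).map Atom.rel).flatten

/-- The IDB relations: relation symbols occurring in some rule head. -/
def Program.idb (P : Program) : List RelSym :=
  (P.rules.map fun ρ => ρ.head.map Atom.rel).flatten

def Program.IsIDB (P : Program) (R : RelSym) : Prop := R ∈ P.idb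

/-- Well-formed program: all rules are well formed, the goal relation does not
occur in rule bodies, and occurs in heads only as the single disjunct of a
(non-disjunctive) goal rule. -/
def Program.WF (P : Program) : Prop :=
  (∀ ρ ∈ P.rules, ρ.WF) ∧
  (∀ ρ ∈ P.rules, ∀ a ∈ ρ.body, a.rel ≠ P.goal) ∧
  (∀ ρ ∈ P.rules, ∀ a ∈ ρ.head, a.rel = P.goal → ρ.head = [a])

/-- Monadic: every IDB relation except the goal relation has arity at most one. -/
def Program.Monadic (P : Program) : Prop :=
  ∀ R ∈ P.idb, R ≠ P.goal → R.arity ≤ 1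

/-- Boolean: the goal relation is nullary. -/
def Program.Boolean (P : Program) : Prop := P.goal.arity = 0

/-- `P` is a program over EDB schema `S`: the EDB relations of `P` (the
relation symbols of `P` that do not occur in rule heads) all belong to `S`,
and `S` contains no IDB relation of `P` and not the goal relation. -/
def Program.EDBOver (P : Program) (S : Schema) : Prop :=
  (∀ R ∈ P.rels, ¬ P.IsIDB R → R ∈ S) ∧ (∀ R ∈ S, ¬ P.IsIDB R ∧ R ≠ P.goal)

/-- `P` is a Boolean MDDLog program over EDB schema `S`. -/
def BooleanMDDLogOver (S : Schema) (P : Program) : Prop :=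
  P.WF ∧ P.Monadic ∧ P.Boolean ∧ P.EDBOver S

/-! ### Semantics -/

/-- An instance satisfies a rule if every assignment making all body atoms true
makes some head atom true. -/
def Rule.SatisfiedIn (ρ : Rule) (J : Instance) : Prop :=
  ∀ h : ℕ → ℕ, (∀ a ∈ ρ.body, a.subst h ∈ J) → ∃ a ∈ ρ.head, a.subst h ∈ J

/-- `J` is a model of the program `P`: it satisfies all rules of `P`. -/
def Program.ModelOf (P : Program) (J : Instance) : Prop :=
  ∀ ρ ∈ P.rules, ρ.SatisfiedIn J

/-- Boolean semantics: `I ⊨ P` iff `goal() ∈ J` for every model `J` of `P`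
with `I ⊆ J`. -/
def Program.Sat (P : Program) (I : Instance) : Prop :=
  ∀ J : Instance, I ⊆ J → P.ModelOf J → (⟨P.goal, []⟩ : Fact) ∈ J

/-- `as ∈ P(I)` for a program `P` of arbitrary arity:
`as` is a tuple over the active domain of `I` of length the arity of the goal
relation and `goal(as) ∈ J` for every model `J` of `P` with `I ⊆ J`. -/
def Program.Answers (P : Program) (I : Instance) (as : List ℕ) : Prop :=
  as.length = P.goal.arity ∧ (∀ x ∈ as, x ∈ adom I) ∧
  ∀ J : Instance, I ⊆ J → P.ModelOf J → (⟨P.goal, as⟩ : Fact) ∈ J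

/-- Containment of Boolean programs over the EDB schema `S`. -/
def Contained (S : Schema) (P₁ P₂ : Program) : Prop :=
  ∀ I : Instance, InstanceOver S I → P₁.Sat I → P₂.Sat I

/-- Containment of Boolean programs over `S`-instances of girth exceeding `k`. -/
def ContainedGirth (S : Schema) (k : ℕ) (P₁ P₂ : Program) : Prop :=
  ∀ I : Instance, InstanceOver S I → GirthGT I k → P₁.Sat I → P₂.Sat I

/-! ### Size measures -/

def Atom.size (a : Atom) : ℕ := 1 + a.args.length

def Rule.size (ρ : Rule) : ℕ := ((ρ.head ++ ρ.body).map Atom.size).sum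

/-- The size of a program: the number of symbols needed to write it, counting
relation and variable names as length one. -/
def Program.size (P : Program) : ℕ := (P.rules.map Rule.size).sum

/-- Number of distinct variables of a rule. -/
def Rule.varWidth (ρ : Rule) : ℕ := ρ.vars.dedup.length

/-- Variable width of a set of rules: maximum number of variables in a rule. -/
def rulesVarWidth (rs : List Rule) : ℕ := (rs.map Rule.varWidth).foldr max 0

def Program.varWidth (P : Program) : ℕ := rulesVarWidth P.rules

/-- Atom width of a set of rules: maximum number of atoms in a rule body. -/
def rulesAtomWidth (rs : List Rule) : ℕ := (rs.map fun ρ => ρ.body.length).foldr max 0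

/-- Rule size of a set of rules: maximum size of a rule. -/
def rulesMaxRuleSize (rs : List Rule) : ℕ := (rs.map Rule.size).foldr max 0

/-! ### Simple programs -/

/-- A rule is simple relative to a notion of EDB relation: it contains at most
one EDB atom, any such EDB atom contains all variables of the rule body, each
exactly once, and if there is no EDB atom then the body has at most one
variable. -/
def SimpleRule (isEDB : RelSym → Prop) (ρ : Rule) : Prop :=
  (∀ a ∈ ρ.body, ∀ b ∈ ρ.body, isEDB a.rel → isEDB b.rel → a = b) ∧
  (∀ a ∈ ρ.body, isEDB a.rel → ∀ x ∈ ρ.bodyVars, a.args.count x = 1) ∧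
  ((∀ a ∈ ρ.body, ¬ isEDB a.rel) → ρ.bodyVars.dedup.length ≤ 1)

/-- A simple MDDLog program. -/
def Program.Simple (P : Program) : Prop :=
  ∀ ρ ∈ P.rules, SimpleRule (fun R => ¬ P.IsIDB R) ρ

/-! ### Disjointness constraints -/

/-- A disjointness constraint `⊥ ← P₁(x) ∧ … ∧ Pₙ(x)`, given by the list of
its relations. -/
structure Constraint where
  rels : List RelSym
deriving DecidableEq

/-- Well-formed disjointness constraint: nonempty, and all relations have the
same arity, which is at most one. -/
def Constraint.WF (c : Constraint) : Prop :=
  c.rels ≠ [] ∧ ∃ k ≤ 1, ∀ P ∈ c.rels, P.arity = k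

/-- `I` satisfies the disjointness constraint `c`: there is no tuple to which
all relations of `c` apply in `I`. -/
def Constraint.SatisfiedIn (c : Constraint) (I : Instance) : Prop :=
  ¬ ∃ args : List ℕ, ∀ P ∈ c.rels, args.length = P.arity ∧ (⟨P, args⟩ : Fact) ∈ I

def SatisfiesAll (D : List Constraint) (I : Instance) : Prop :=
  ∀ c ∈ D, c.SatisfiedIn I

/-- The relation symbols occurring in a set of disjointness constraints. -/
def constraintRels (D : List Constraint) : List RelSym :=
  (D.map Constraint.rels).flatten

def ConstraintsOver (S : Schema) (D : List Constraint) : Prop :=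
  ∀ R ∈ constraintRels D, R ∈ S

/-- `P` is semi-simple w.r.t. `D`: `P` is simple when all relations occurring
in `D` are viewed as IDB relations. -/
def Program.SemiSimple (P : Program) (D : List Constraint) : Prop :=
  ∀ ρ ∈ P.rules, SimpleRule (fun R => ¬ P.IsIDB R ∧ R ∉ constraintRels D) ρ

/-- `P` is empty w.r.t. `D` (on `S`-instances). -/
def Program.EmptyWrt (P : Program) (S : Schema) (D : List Constraint) : Prop :=
  ∀ I : Instance, InstanceOver S I → SatisfiesAll D I → ¬ P.Sat I

def constraintsSize (D : List Constraint) : ℕ :=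
  (D.map fun c => 1 + c.rels.length).sum

/-- Variable width of a set of disjointness constraints (each constraint uses
a single variable when its relations are unary, none when nullary). -/
def constraintsVarWidth (D : List Constraint) : ℕ :=
  (D.map fun c => (c.rels.map RelSym.arity).foldr max 0).foldr max 0

/-! ### 0-types, 1-types -/

/-- A 0-type for `D`: a set of nullary relation symbols from the relations of
`D` that does not contain all relations co-occurring in some constraint of `D`. -/
def Is0Type (D : List Constraint) (θ : Finset RelSym) : Prop :=
  (∀ P ∈ θ, P.arity = 0 ∧ P ∈ constraintRels D) ∧
  ∀ c ∈ D, ¬ ∀ P ∈ c.rels, P ∈ θ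

/-- A 1-type for `D`. -/
def Is1Type (D : List Constraint) (t : Finset RelSym) : Prop :=
  (∀ P ∈ t, P.arity = 1 ∧ P ∈ constraintRels D) ∧
  ∀ c ∈ D, ¬ ∀ P ∈ c.rels, P ∈ t

/-- The 0-type of `I` is contained in `θ`. -/
def ZeroTypeLE (D : List Constraint) (I : Instance) (θ : Finset RelSym) : Prop :=
  ∀ P : RelSym, P.arity = 0 → P ∈ constraintRels D → (⟨P, []⟩ : Fact) ∈ I → P ∈ θ

/-- Specification of the facts of the instance `K_θ`, with constants given by
an (injective) encoding `e` of 1-types: `P(t)` for each 1-type `t` and each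
`P ∈ t`; `R(t₁,…,tₙ)` for each `R ∈ S \ S_D` and all 1-types `t₁,…,tₙ`; and
`P()` for each nullary `P ∈ θ`. -/
def KSpec (S : Schema) (D : List Constraint) (e : Finset RelSym → ℕ)
    (θ : Finset RelSym) (f : Fact) : Prop :=
  (∃ t : Finset RelSym, Is1Type D t ∧ ∃ P ∈ t, f = ⟨P, [e t]⟩) ∨
  (∃ R ∈ S, R ∉ constraintRels D ∧
    ∃ ts : List (Finset RelSym), ts.length = R.arity ∧ (∀ t ∈ ts, Is1Type D t) ∧
      f = ⟨R, ts.map e⟩) ∨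
  (∃ P ∈ θ, f = ⟨P, []⟩)

/-! ### Conjunctive queries -/

/-- A Boolean conjunctive query: a finite conjunction of atoms, all variables
existentially quantified. -/
abbrev CQ := List Atom

/-- `I ⊨ q` for a Boolean CQ `q`. -/
def CQSat (q : CQ) (I : Instance) : Prop :=
  ∃ h : ℕ → ℕ, ∀ a ∈ q, a.subst h ∈ I

def CQOver (S : Schema) (q : CQ) : Prop :=
  ∀ a ∈ q, a.rel ∈ S ∧ a.args.length = a.rel.arity

def CQsize (q : CQ) : ℕ := (q.map Atom.size).sum

/-- Containment of a Boolean MDDLog program in a Boolean CQ. -/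
def ContainedInCQ (S : Schema) (P : Program) (q : CQ) : Prop :=
  ∀ I : Instance, InstanceOver S I → P.Sat I → CQSat q I

/-! ### Tiling problems -/

/-- A 2-exp tiling problem `(𝕋, ℍ, 𝕍)`: tile types with horizontal and
vertical matching relations. -/
structure TilingProblem where
  tiles : Finset ℕ
  H : Finset (ℕ × ℕ)
  V : Finset (ℕ × ℕ)

def TilingProblem.WF (P : TilingProblem) : Prop :=
  (∀ p ∈ P.H, p.1 ∈ P.tiles ∧ p.2 ∈ P.tiles) ∧
  (∀ p ∈ P.V, p.1 ∈ P.tiles ∧ p.2 ∈ P.tiles)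

def TilingProblem.size (P : TilingProblem) : ℕ := P.tiles.card + P.H.card + P.V.card

/-- There is a tiling of the `2^{2^n} × 2^{2^n}` square for `P` and the input
word `w` (where `n + 1` is the length of `w`). -/
def HasSquareTiling (P : TilingProblem) (w : List ℕ) : Prop :=
  ∃ f : ℕ → ℕ → ℕ,
    (∀ i < 2 ^ 2 ^ (w.length - 1), ∀ j < 2 ^ 2 ^ (w.length - 1), f i j ∈ P.tiles) ∧
    (∀ j < w.length, f 0 j = w.getD j 0) ∧
    (∀ i, ∀ j < 2 ^ 2 ^ (w.length - 1), i + 1 < 2 ^ 2 ^ (w.length - 1) → (f i j, f (i + 1) j) ∈ P.H) ∧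
    (∀ i < 2 ^ 2 ^ (w.length - 1), ∀ j, j + 1 < 2 ^ 2 ^ (w.length - 1) → (f i j, f i (j + 1)) ∈ P.V)

/-- There is a tiling of the `2^{2^n} × 2^{2^n}` torus for `P` and `w`. -/
def HasTorusTiling (P : TilingProblem) (w : List ℕ) : Prop :=
  ∃ f : ℕ → ℕ → ℕ,
    (∀ i < 2 ^ 2 ^ (w.length - 1), ∀ j < 2 ^ 2 ^ (w.length - 1), f i j ∈ P.tiles) ∧
    (∀ j < w.length, f 0 j = w.getD j 0) ∧
    (∀ i < 2 ^ 2 ^ (w.length - 1), ∀ j < 2 ^ 2 ^ (w.length - 1),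
      (f i j, f ((i + 1) % 2 ^ 2 ^ (w.length - 1)) j) ∈ P.H) ∧
    (∀ i < 2 ^ 2 ^ (w.length - 1), ∀ j < 2 ^ 2 ^ (w.length - 1),
      (f i j, f i ((j + 1) % 2 ^ 2 ^ (w.length - 1))) ∈ P.V)

/-! ### First-order rewritability -/

/-- First-order formulas over relational schemas, with variables from `ℕ`. -/
inductive FO where
  | atom (R : RelSym) (args : List ℕ)
  | eq (x y : ℕ)
  | fls
  | imp (φ ψ : FO)
  | all (x : ℕ) (φ : FO)

/-- Active-domain semantics of first-order formulas on instances. -/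
def FO.Eval (I : Instance) : FO → (ℕ → ℕ) → Prop
  | .atom R args, h => (⟨R, args.map h⟩ : Fact) ∈ I
  | .eq x y, h => h x = h y
  | .fls, _ => False
  | .imp φ ψ, h => FO.Eval I φ h → FO.Eval I ψ h
  | .all x φ, h => ∀ a ∈ adom I, FO.Eval I φ (Function.update h x a)

def FO.Over (S : Schema) : FO → Prop
  | .atom R args => R ∈ S ∧ args.length = R.arity
  | .eq _ _ => True
  | .fls => True
  | .imp φ ψ => FO.Over S φ ∧ FO.Over S ψ
  | .all _ φ => FO.Over S φ

def FOSat (I : Instance) (φ : FO) : Prop := ∀ h : ℕ → ℕ, FO.Eval I φ h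

/-- `P` is rewritable into a first-order sentence over `S`. -/
def FORewritable (S : Schema) (P : Program) : Prop :=
  ∃ φ : FO, FO.Over S φ ∧ ∀ I : Instance, InstanceOver S I → (P.Sat I ↔ FOSat I φ)

/-- A non-disjunctive Datalog program: every rule head consists of exactly one
atom. -/
def Program.IsDatalog (P : Program) : Prop := ∀ ρ ∈ P.rules, ρ.head.length = 1

/-- `P` is rewritable into a Boolean non-disjunctive Datalog program over `S`. -/
def DatalogRewritable (S : Schema) (P : Program) : Prop :=
  ∃ Γ : Program, Γ.WF ∧ Γ.Boolean ∧ Γ.IsDatalog ∧ Γ.EDBOver S ∧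
    ∀ I : Instance, InstanceOver S I → (P.Sat I ↔ Γ.Sat I)

/-! ### Connectedness and biconnectedness of rule bodies -/

/-- Two variables are adjacent in a body if they co-occur in one of its atoms. -/
def VarsAdj (B : List Atom) (x y : ℕ) : Prop := ∃ a ∈ B, x ∈ a.args ∧ y ∈ a.args

def bodyVarsList (B : List Atom) : List ℕ := (B.map Atom.args).flatten

/-- A body is connected if any two of its variables are linked by a path of
adjacent variables. -/
def ConnectedBody (B : List Atom) : Prop :=
  ∀ x ∈ bodyVarsList B, ∀ y ∈ bodyVarsList B, Relation.ReflTransGen (VarsAdj B) x y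

/-- Remove a variable from a body: delete all atoms containing it. -/
def RemoveVar (B : List Atom) (x : ℕ) : List Atom :=
  B.filter fun a => ¬ (a.args.contains x)

/-- A body is biconnected if removing any single variable (with all atoms
containing it) leaves it connected. -/
def Biconnected (B : List Atom) : Prop := ∀ x : ℕ, ConnectedBody (RemoveVar B x)

/-- A reflexive atom `R(x,…,x)`. -/
def ReflexiveAtom (a : Atom) : Prop := a.args ≠ [] ∧ ∃ x, ∀ y ∈ a.args, y = x

end MDDLogPaper

/-!
Given a counter-model `J` of `I` (a model of `Π` containing `I` but not `goal()`), identify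
constants of `J` with the same unary type, i.e. the same set of relations `R` of `Π` with
`R(a) ∈ J`. In a rule of a semi-simple program every atom except at most one is monadic, and the
remaining atom contains each body variable exactly once; so every match of a rule body in the
quotient lifts to a match in `J`, and the quotient is again a counter-model. Hence `I` maps into
its own image in the quotient, an `S_E`-instance over the finitely many codes of unary types that
does not entail `Π`. Conversely, a counter-model of `T` pulls back along a homomorphism `I → T`
to a counter-model of `I`, because the heads of a monadic program only produce facts of arity at
most one. The templates are therefore all such `S_E`-instances over the codes that do not
entail `Π`.
-/

lemma List.exists_map_eq_of_nodup {α β : Type*} [DecidableEq α] [Inhabited β] {l : List α}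
    {m : List β} (hl : l.Nodup) (hlen : l.length = m.length) : ∃ g : α → β, l.map g = m :=
  ⟨fun x => m.getD (l.idxOf x) default,
    List.ext_getElem (by simpa using hlen) fun i _ hi => by simp [hl.idxOf_getElem, hi]⟩

lemma List.finite_length_le_of_forall_mem {α : Type*} (C : Finset α) (n : ℕ) :
    {l : List α | l.length ≤ n ∧ ∀ x ∈ l, x ∈ C}.Finite := by
  refine ((List.finite_length_le C n).image (List.map Subtype.val)).subset fun l hl => ?_
  exact ⟨l.attach.map fun x => ⟨x.1, hl.2 x.1 x.2⟩, by simpa using hl.1, by simp⟩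

namespace MDDLogPaper

instance : Encodable RelSym :=
  Encodable.ofEquiv (ℕ × ℕ)
    ⟨fun R => (R.name, R.arity), fun p => ⟨p.1, p.2⟩, fun _ => rfl, fun _ => rfl⟩

def Fact.map (h : ℕ → ℕ) (F : Fact) : Fact := ⟨F.rel, F.args.map h⟩

@[simp] lemma Fact.map_mk (h : ℕ → ℕ) (R : RelSym) (l : List ℕ) :
    Fact.map h ⟨R, l⟩ = ⟨R, l.map h⟩ := rfl

lemma Atom.map_subst (h g : ℕ → ℕ) (a : Atom) : (a.subst g).map h = a.subst (h ∘ g) := by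
  simp [Atom.subst, Fact.map]

lemma isHom_image_map (h : ℕ → ℕ) (I : Instance) : IsHom h I (I.image (Fact.map h)) :=
  fun _ hF => Finset.mem_image_of_mem (Fact.map h) hF

lemma exists_mem_of_mem_image_map {J : Instance} {q : ℕ → ℕ} {R : RelSym} {l : List ℕ}
    (h : (⟨R, l⟩ : Fact) ∈ J.image (Fact.map q)) :
    ∃ l', (⟨R, l'⟩ : Fact) ∈ J ∧ l'.map q = l := by
  obtain ⟨⟨R', l'⟩, hF, hRl⟩ := Finset.mem_image.1 h
  simp only [Fact.map_mk, Fact.mk.injEq] at hRl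
  exact ⟨l', hRl.1 ▸ hF, hRl.2⟩

lemma finite_facts (R : Finset RelSym) (C : Finset ℕ) (n : ℕ) :
    {F : Fact | F.rel ∈ R ∧ F.args.length ≤ n ∧ ∀ x ∈ F.args, x ∈ C}.Finite := by
  refine ((R.finite_toSet.prod (List.finite_length_le_of_forall_mem C n)).image
    fun p => Fact.mk p.1 p.2).subset ?_
  rintro ⟨R', l⟩ hF
  exact ⟨(R', l), hF, rfl⟩

lemma finite_instances (S : Schema) (C : Finset ℕ) :
    {T : Instance | InstanceOver S T ∧ ∀ F ∈ T, ∀ x ∈ F.args, x ∈ C}.Finite := by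
  have hfacts := finite_facts S C (S.sup RelSym.arity)
  refine (hfacts.finite_subsets.preimage Finset.coe_injective.injOn).subset fun T hT F hF => ?_
  obtain ⟨hRS, hlen⟩ := hT.1 F hF
  exact ⟨hRS, hlen ▸ Finset.le_sup hRS, hT.2 F hF⟩

lemma InstanceOver.image_map {S : Schema} {I : Instance} (hI : InstanceOver S I)
    (h : ℕ → ℕ) : InstanceOver S (I.image (Fact.map h)) := by
  simp only [InstanceOver, Finset.mem_image]
  rintro _ ⟨F, hF, rfl⟩
  simpa [Fact.map] using hI F hF

lemma forall_mem_args_image_map {C : Finset ℕ} {q : ℕ → ℕ} (hq : ∀ a, q a ∈ C) (I : Instance) :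
    ∀ F ∈ I.image (Fact.map q), ∀ x ∈ F.args, x ∈ C := by
  simp only [Finset.mem_image, Fact.map]
  rintro _ ⟨F, -, rfl⟩ _ hx
  obtain ⟨a, -, rfl⟩ := List.mem_map.1 hx
  exact hq a

lemma Rule.mem_bodyVars {ρ : Rule} {x : ℕ} : x ∈ ρ.bodyVars ↔ ∃ a ∈ ρ.body, x ∈ a.args := by
  simp [Rule.bodyVars]

lemma Rule.mem_headVars {ρ : Rule} {x : ℕ} : x ∈ ρ.headVars ↔ ∃ a ∈ ρ.head, x ∈ a.args := by
  simp [Rule.headVars]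

lemma Program.rel_mem_rels {P : Program} {ρ : Rule} {a : Atom} (hρ : ρ ∈ P.rules)
    (ha : a ∈ ρ.head ++ ρ.body) : a.rel ∈ P.rels := by
  simp only [Program.rels, List.mem_flatten, List.mem_map]
  exact ⟨_, ⟨ρ, hρ, rfl⟩, List.mem_map_of_mem ha⟩

lemma Program.isIDB_of_mem_head {P : Program} {ρ : Rule} {a : Atom} (hρ : ρ ∈ P.rules)
    (ha : a ∈ ρ.head) : P.IsIDB a.rel := by
  simp only [Program.IsIDB, Program.idb, List.mem_flatten, List.mem_map]
  exact ⟨_, ⟨ρ, hρ, rfl⟩, List.mem_map_of_mem ha⟩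

lemma Program.not_sat_iff {P : Program} {I : Instance} :
    ¬ P.Sat I ↔ ∃ J, I ⊆ J ∧ P.ModelOf J ∧ (⟨P.goal, []⟩ : Fact) ∉ J := by
  simp [Program.Sat]

lemma length_args_le_one_of_not_edb {P : Program} {D : List Constraint} (hwf : P.WF)
    (hmon : P.Monadic) (hDwf : ∀ c ∈ D, c.WF) {ρ : Rule} {a : Atom} (hρ : ρ ∈ P.rules)
    (ha : a ∈ ρ.body) (hE : ¬ (¬ P.IsIDB a.rel ∧ a.rel ∉ constraintRels D)) :
    a.args.length ≤ 1 := by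
  rw [(hwf.1 ρ hρ).2.1 a (List.mem_append_right _ ha)]
  rcases not_and_or.1 hE with hidb | hc
  · exact hmon a.rel (not_not.1 hidb) (hwf.2.1 ρ hρ a ha)
  · have hc := not_not.1 hc
    simp only [constraintRels, List.mem_flatten, List.mem_map] at hc
    obtain ⟨_, ⟨c, hc, rfl⟩, hac⟩ := hc
    obtain ⟨k, hk, hall⟩ := (hDwf c hc).2
    exact hall a.rel hac ▸ hk

lemma subst_mem_of_subst_mem_image_map {J : Instance} {q g g' : ℕ → ℕ} {a : Atom}
    (hJ : ∀ b c, q b = q c → (⟨a.rel, [b]⟩ : Fact) ∈ J → (⟨a.rel, [c]⟩ : Fact) ∈ J)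
    (hlen : a.args.length ≤ 1) (hg : ∀ x ∈ a.args, q (g' x) = g x)
    (hmem : a.subst g ∈ J.image (Fact.map q)) : a.subst g' ∈ J := by
  obtain ⟨R, args⟩ := a
  obtain ⟨l, hl, hlq⟩ := exists_mem_of_mem_image_map hmem
  match args, hlen with
  | [], _ => simpa [Atom.subst, List.map_eq_nil_iff.1 hlq] using hl
  | [x], _ =>
    obtain ⟨b, rfl, hb⟩ := List.map_eq_singleton_iff.1 hlq
    exact hJ b (g' x) (hb.trans (hg x (List.mem_singleton_self x)).symm) hl

lemma SimpleRule.exists_lift {isEDB : RelSym → Prop} {ρ : Rule} (hρ : SimpleRule isEDB ρ)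
    {J : Instance} {q g : ℕ → ℕ} (hbody : ∀ a ∈ ρ.body, a.subst g ∈ J.image (Fact.map q)) :
    ∃ g' : ℕ → ℕ, (∀ x ∈ ρ.bodyVars, q (g' x) = g x) ∧
      ∀ a ∈ ρ.body, isEDB a.rel → a.subst g' ∈ J := by
  by_cases hE : ∃ β ∈ ρ.body, isEDB β.rel
  · obtain ⟨β, hβ, hβE⟩ := hE
    obtain ⟨l, hl, hlq⟩ := exists_mem_of_mem_image_map (hbody β hβ)
    have hcount := hρ.2.1 β hβ hβE
    have hnodup : β.args.Nodup :=
      List.nodup_iff_count_eq_one.2 fun x hx => hcount x (Rule.mem_bodyVars.2 ⟨β, hβ, hx⟩)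
    obtain ⟨g', hg'⟩ :=
      List.exists_map_eq_of_nodup hnodup (by simpa using congrArg List.length hlq.symm)
    refine ⟨g', fun x hx => ?_, fun a ha haE => ?_⟩
    · have hxβ : x ∈ β.args := List.count_pos_iff.1 (by rw [hcount x hx]; exact one_pos)
      have hmap : β.args.map (q ∘ g') = β.args.map g := by rw [← List.map_map, hg', hlq]
      exact List.map_inj_left.1 hmap x hxβ
    · rw [hρ.1 a ha β hβ haE hβE]
      simpa [Atom.subst, hg'] using hl
  · -- all body atoms are monadic, so any section of `q` lifts `g`
    push Not at hE
    refine ⟨fun x => Function.invFun q (g x), fun x hx => Function.invFun_eq ?_,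
      fun a ha haE => absurd haE (hE a ha)⟩
    obtain ⟨a, ha, hxa⟩ := Rule.mem_bodyVars.1 hx
    obtain ⟨l, -, hlq⟩ := exists_mem_of_mem_image_map (hbody a ha)
    obtain ⟨b, -, hb⟩ := List.mem_map.1 (hlq ▸ List.mem_map_of_mem hxa : g x ∈ l.map q)
    exact ⟨b, hb⟩

theorem Program.ModelOf.image_map {P : Program} {D : List Constraint} (hwf : P.WF)
    (hmon : P.Monadic) (hDwf : ∀ c ∈ D, c.WF) (hss : P.SemiSimple D) {J : Instance}
    (hJ : P.ModelOf J) {q : ℕ → ℕ}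
    (hq : ∀ R ∈ P.rels, ∀ a b, q a = q b → (⟨R, [a]⟩ : Fact) ∈ J → (⟨R, [b]⟩ : Fact) ∈ J) :
    P.ModelOf (J.image (Fact.map q)) := by
  intro ρ hρ g hbody
  obtain ⟨g', hg'q, hg'E⟩ := (hss ρ hρ).exists_lift hbody
  have hbody' : ∀ a ∈ ρ.body, a.subst g' ∈ J := by
    intro a ha
    by_cases haE : ¬ P.IsIDB a.rel ∧ a.rel ∉ constraintRels D
    · exact hg'E a ha haE
    · exact subst_mem_of_subst_mem_image_map
        (hq a.rel (Program.rel_mem_rels hρ (List.mem_append_right _ ha)))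
        (length_args_le_one_of_not_edb hwf hmon hDwf hρ ha haE)
        (fun x hx => hg'q x (Rule.mem_bodyVars.2 ⟨a, ha, hx⟩)) (hbody a ha)
  obtain ⟨a, ha, haJ⟩ := hJ ρ hρ g' hbody'
  refine ⟨a, ha, Finset.mem_image.2 ⟨_, haJ, ?_⟩⟩
  rw [Atom.map_subst]
  simp only [Atom.subst, Fact.mk.injEq, true_and]
  exact List.map_congr_left fun x hx =>
    hg'q x ((hwf.1 ρ hρ).2.2 x (Rule.mem_headVars.2 ⟨a, ha, hx⟩))

/-- Quotienting by `unaryTypeCode Rs J` identifies constants with the same unary type; encoding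
types as naturals keeps the quotient an `Instance`. -/
noncomputable def unaryTypeCode (Rs : Finset RelSym) (J : Instance) (a : ℕ) : ℕ :=
  open Classical in Encodable.encode (Rs.filter fun R => (⟨R, [a]⟩ : Fact) ∈ J)

lemma unaryTypeCode_mem (Rs : Finset RelSym) (J : Instance) (a : ℕ) :
    unaryTypeCode Rs J a ∈ Rs.powerset.image Encodable.encode :=
  Finset.mem_image_of_mem _ (Finset.mem_powerset.2 (Finset.filter_subset _ _))

lemma mem_of_unaryTypeCode_eq {Rs : Finset RelSym} {J : Instance} {R : RelSym} {a b : ℕ}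
    (hR : R ∈ Rs) (hab : unaryTypeCode Rs J a = unaryTypeCode Rs J b)
    (ha : (⟨R, [a]⟩ : Fact) ∈ J) : (⟨R, [b]⟩ : Fact) ∈ J := by
  classical
  have hR' : R ∈ Rs.filter fun R => (⟨R, [a]⟩ : Fact) ∈ J := Finset.mem_filter.2 ⟨hR, ha⟩
  rw [Encodable.encode_injective hab] at hR'
  exact (Finset.mem_filter.1 hR').2

theorem exists_not_sat_image_map {P : Program} {D : List Constraint} (hwf : P.WF)
    (hmon : P.Monadic) (hDwf : ∀ c ∈ D, c.WF) (hss : P.SemiSimple D) {I : Instance}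
    (hI : ¬ P.Sat I) :
    ∃ q : ℕ → ℕ, (∀ a, q a ∈ P.rels.toFinset.powerset.image Encodable.encode) ∧
      ¬ P.Sat (I.image (Fact.map q)) := by
  obtain ⟨J, hIJ, hJ, hgoal⟩ := Program.not_sat_iff.1 hI
  refine ⟨unaryTypeCode P.rels.toFinset J, unaryTypeCode_mem _ J, Program.not_sat_iff.2
    ⟨_, Finset.image_subset_image hIJ, hJ.image_map hwf hmon hDwf hss fun R hR _ _ hab =>
      mem_of_unaryTypeCode_eq (List.mem_toFinset.2 hR) hab, fun h => hgoal ?_⟩⟩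
  obtain ⟨l, hl, hlq⟩ := exists_mem_of_mem_image_map h
  rwa [List.map_eq_nil_iff.1 hlq] at hl

noncomputable def monadicPullback (h : ℕ → ℕ) (I J : Instance) : Instance :=
  open Classical in
  (finite_facts (J.image Fact.rel) (adom I) 1).toFinset.filter fun F => F.map h ∈ J

lemma mem_monadicPullback {h : ℕ → ℕ} {I J : Instance} {F : Fact} :
    F ∈ monadicPullback h I J ↔
      F.args.length ≤ 1 ∧ (∀ x ∈ F.args, x ∈ adom I) ∧ F.map h ∈ J := by
  simp only [monadicPullback, Finset.mem_filter, Set.Finite.mem_toFinset, Set.mem_ofPred_eq]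
  exact ⟨fun ⟨⟨_, hlen, hdom⟩, hF⟩ => ⟨hlen, hdom, hF⟩,
    fun ⟨hlen, hdom, hF⟩ => ⟨⟨Finset.mem_image.2 ⟨_, hF, rfl⟩, hlen, hdom⟩, hF⟩⟩

theorem not_sat_of_isHom {P : Program} (hwf : P.WF) (hmon : P.Monadic) (hbool : P.Boolean)
    {I T : Instance} (hI : (⟨P.goal, []⟩ : Fact) ∉ I) {h : ℕ → ℕ} (hh : IsHom h I T)
    (hT : ¬ P.Sat T) : ¬ P.Sat I := by
  obtain ⟨J', hTJ', hJ', hgoal'⟩ := Program.not_sat_iff.1 hT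
  set J := I ∪ monadicPullback h I J'
  have hpush : ∀ F ∈ J, F.map h ∈ J' := by
    intro F hF
    rcases Finset.mem_union.1 hF with hF | hF
    · exact hTJ' (hh F hF)
    · exact (mem_monadicPullback.1 hF).2.2
  have hdom : ∀ F ∈ J, ∀ x ∈ F.args, x ∈ adom I := by
    intro F hF x hx
    rcases Finset.mem_union.1 hF with hF | hF
    · exact Finset.mem_biUnion.2 ⟨F, hF, List.mem_toFinset.2 hx⟩
    · exact (mem_monadicPullback.1 hF).2.1 x hx
  refine Program.not_sat_iff.2
    ⟨J, Finset.subset_union_left, fun ρ hρ g hbody => ?_, fun hgoal => ?_⟩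
  · obtain ⟨a, ha, haJ'⟩ :=
      hJ' ρ hρ (h ∘ g) fun b hb => Atom.map_subst h g b ▸ hpush _ (hbody b hb)
    have hlen := (hwf.1 ρ hρ).2.1 a (List.mem_append_left _ ha)
    have hgoal : a.rel ≠ P.goal := by
      rintro hag
      rw [hag, hbool, List.length_eq_zero_iff] at hlen
      exact hgoal' (by simpa [Atom.subst, hlen, hag] using haJ')
    refine ⟨a, ha, Finset.mem_union_right _
      (mem_monadicPullback.2 ⟨?_, ?_, Atom.map_subst h g a ▸ haJ'⟩)⟩
    · simpa [Atom.subst, hlen] using hmon a.rel (Program.isIDB_of_mem_head hρ ha) hgoal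
    · simp only [Atom.subst, List.mem_map]
      rintro _ ⟨y, hy, rfl⟩
      obtain ⟨b, hb, hyb⟩ :=
        Rule.mem_bodyVars.1 ((hwf.1 ρ hρ).2.2 y (Rule.mem_headVars.2 ⟨a, ha, hy⟩))
      exact hdom _ (hbody b hb) (g y) (List.mem_map_of_mem hyb)
  · rcases Finset.mem_union.1 hgoal with hgoal | hgoal
    · exact hI hgoal
    · exact hgoal' (mem_monadicPullback.1 hgoal).2.2

theorem csp_templates_general (S : Schema) (P : Program) (D : List Constraint)
    (hP : BooleanMDDLogOver S P) (hDwf : ∀ c ∈ D, c.WF)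
    (hss : P.SemiSimple D)
    (θ : Finset RelSym) :
    ∃ Ts : List Instance, (∀ T ∈ Ts, InstanceOver S T) ∧
      ∀ I : Instance, InstanceOver S I → ZeroTypeLE D I θ →
        (¬ P.Sat I ↔ ∃ T ∈ Ts, HomTo I T) := by
  obtain ⟨hwf, hmon, hbool, -, hS⟩ := hP
  set C := P.rels.toFinset.powerset.image Encodable.encode
  have hfin : {T | (InstanceOver S T ∧ ∀ F ∈ T, ∀ x ∈ F.args, x ∈ C) ∧ ¬ P.Sat T}.Finite :=
    (finite_instances S C).subset fun _ hT => hT.1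
  have hmem {T : Instance} : T ∈ hfin.toFinset.toList ↔
      (InstanceOver S T ∧ ∀ F ∈ T, ∀ x ∈ F.args, x ∈ C) ∧ ¬ P.Sat T := by
    simp
  refine ⟨hfin.toFinset.toList, fun T hT => (hmem.1 hT).1.1, fun I hI _ => ⟨fun hns => ?_, ?_⟩⟩
  · obtain ⟨q, hqC, hq⟩ := exists_not_sat_image_map hwf hmon hDwf hss hns
    exact ⟨I.image (Fact.map q),
      hmem.2 ⟨⟨hI.image_map q, forall_mem_args_image_map hqC I⟩, hq⟩, q, isHom_image_map q I⟩
  · rintro ⟨T, hT, h, hh⟩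
    exact not_sat_of_isHom hwf hmon hbool (fun hg => (hS _ (hI _ hg).1).2 rfl) hh
      (hmem.1 hT).2

/-- for every 0-type `θ` there are finitely many templates
`T₀, …, Tₙ` such that for every `S_E`-instance `I` whose 0-type is contained in
`θ`: `I ⊭ Π` iff `I` maps homomorphically into some `Tᵢ`. -/
theorem csp_templates (S : Schema) (P : Program) (D : List Constraint)
    (hP : BooleanMDDLogOver S P) (hD : ConstraintsOver S D) (hDwf : ∀ c ∈ D, c.WF)
    (hss : P.SemiSimple D)
    (θ : Finset RelSym) (hθ : Is0Type D θ) :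
    ∃ Ts : List Instance, (∀ T ∈ Ts, InstanceOver S T) ∧
      ∀ I : Instance, InstanceOver S I → ZeroTypeLE D I θ →
        (¬ P.Sat I ↔ ∃ T ∈ Ts, HomTo I T) :=
  csp_templates_general S P D hP hDwf hss θ

end MDDLogPaper
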